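/- Under the same curvature assumptions as the previous commutation formula (F_{12} = -½|φ|², etc.), the operator J_k := x_k + 2it D_k satisfies (D_t - i D_ℓ D_ℓ) J_k ψ = J_k (D_t - i D_ℓ D_ℓ) ψ + 2it ε_{kℓ}( |φ|² D_ℓ ψ + φ conj(D_ℓ φ) ψ ) for any smooth ψ. -/

import Mathlib

open Complex

/-- Spatial covariant derivative `D_j = ∂_j + i A_j` on spacetime `ℝ × ℝ²`. -/
noncomputable def DcovSp (A : Fin 2 → ℝ → (Fin 2 → ℝ) → ℝ) (j : Fin 2)
    (f : ℝ → (Fin 2 → ℝ) → ℂ) : ℝ → (Fin 2 → ℝ) → ℂ :=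
  fun t x => fderiv ℝ (f t) x (Pi.single j 1) + Complex.I * (A j t x) * f t x

/-- Temporal covariant derivative `D_t = ∂_t + i A_0`. -/
noncomputable def DcovT (A0 : ℝ → (Fin 2 → ℝ) → ℝ)
    (f : ℝ → (Fin 2 → ℝ) → ℂ) : ℝ → (Fin 2 → ℝ) → ℂ :=
  fun t x => deriv (fun s => f s x) t + Complex.I * (A0 t x) * f t x

/-- Covariant Schrödinger operator `D_t - i D_ℓ D_ℓ`. -/
noncomputable def covSchOp (A0 : ℝ → (Fin 2 → ℝ) → ℝ) (A : Fin 2 → ℝ → (Fin 2 → ℝ) → ℝ)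
    (f : ℝ → (Fin 2 → ℝ) → ℂ) : ℝ → (Fin 2 → ℝ) → ℂ :=
  fun t x => DcovT A0 f t x
    - Complex.I * (∑ ℓ : Fin 2, DcovSp A ℓ (DcovSp A ℓ f) t x)

/-- The antisymmetric symbol `ε_{jk}` with `ε_{12} = 1`. -/
def eps : Fin 2 → Fin 2 → ℝ := ![![0, 1], ![-1, 0]]


/-- The covariant Galilean vector field `J_k = x_k + 2it D_k` on spacetime. -/
noncomputable def JcovSp (A : Fin 2 → ℝ → (Fin 2 → ℝ) → ℝ) (k : Fin 2)
    (f : ℝ → (Fin 2 → ℝ) → ℂ) : ℝ → (Fin 2 → ℝ) → ℂ :=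
  fun t x => (x k : ℂ) * f t x + 2 * Complex.I * (t : ℂ) * DcovSp A k f t x


noncomputable section CJProof
abbrev E2 := ℝ × (Fin 2 → ℝ)
def pds (v : E2) (F : E2 → ℂ) : E2 → ℂ := fun p => fderiv ℝ F p v

lemma contDiff_pds {F : E2 → ℂ} (hF : ContDiff ℝ (⊤ : ℕ∞) F) (v : E2) : ContDiff ℝ (⊤ : ℕ∞) (pds v F) :=
  (hF.fderiv_right (by simp)).clm_apply contDiff_const

lemma pds_comm {F : E2 → ℂ} (hF : ContDiff ℝ (⊤ : ℕ∞) F) (v w : E2) (p : E2) :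
    pds v (pds w F) p = pds w (pds v F) p := by
  have hs : IsSymmSndFDerivAt ℝ F p := hF.contDiffAt.isSymmSndFDerivAt (by rw [minSmoothness_of_isRCLikeNormedField]; exact WithTop.coe_le_coe.mpr le_top)
  have h1 : ∀ u u' : E2, fderiv ℝ (fun q => fderiv ℝ F q u) p u'
      = fderiv ℝ (fderiv ℝ F) p u' u := by
    intro u u'
    rw [fderiv_clm_apply (x := p)
      (((hF.fderiv_right (m := (⊤ : ℕ∞)) (by simp)).differentiable (by simp)).differentiableAt)
      (differentiableAt_const u)]
    simp
  show fderiv ℝ (fun q => fderiv ℝ F q w) p v = fderiv ℝ (fun q => fderiv ℝ F q v) p w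
  rw [h1, h1]
  exact hs v w
def pdr (v : E2) (G : E2 → ℝ) : E2 → ℝ := fun p => fderiv ℝ G p v

variable {F G : E2 → ℂ} {g : E2 → ℝ} {v w p : E2}

lemma dAt (hF : ContDiff ℝ (⊤ : ℕ∞) F) (p : E2) : DifferentiableAt ℝ F p :=
  (hF.differentiable (by simp)).differentiableAt
lemma dAtr (hg : ContDiff ℝ (⊤ : ℕ∞) g) (p : E2) : DifferentiableAt ℝ g p :=
  (hg.differentiable (by simp)).differentiableAt

lemma pds_add (hF : ContDiff ℝ (⊤ : ℕ∞) F) (hG : ContDiff ℝ (⊤ : ℕ∞) G) :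
    pds v (fun q => F q + G q) p = pds v F p + pds v G p := by
  simp [pds, fderiv_fun_add (dAt hF p) (dAt hG p)]
lemma pds_sub (hF : ContDiff ℝ (⊤ : ℕ∞) F) (hG : ContDiff ℝ (⊤ : ℕ∞) G) :
    pds v (fun q => F q - G q) p = pds v F p - pds v G p := by
  simp [pds, fderiv_fun_sub (dAt hF p) (dAt hG p)]
lemma pds_mul (hF : ContDiff ℝ (⊤ : ℕ∞) F) (hG : ContDiff ℝ (⊤ : ℕ∞) G) :
    pds v (fun q => F q * G q) p = pds v F p * G p + F p * pds v G p := by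
  simp [pds, fderiv_fun_mul (dAt hF p) (dAt hG p)]; ring
lemma pds_const_mul (hF : ContDiff ℝ (⊤ : ℕ∞) F) (c : ℂ) :
    pds v (fun q => c * F q) p = c * pds v F p := by
  simp [pds, fderiv_const_mul (dAt hF p) c]
lemma pds_ofReal (hg : ContDiff ℝ (⊤ : ℕ∞) g) :
    pds v (fun q => (g q : ℂ)) p = (pdr v g p : ℂ) := by
  have h := (Complex.ofRealCLM.hasFDerivAt (x := g p)).comp p (dAtr hg p).hasFDerivAt
  have h' : HasFDerivAt (fun q => ((g q : ℝ) : ℂ)) (Complex.ofRealCLM.comp (fderiv ℝ g p)) p := h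
  simp only [pds, pdr]
  rw [h'.fderiv]; rfl
lemma pds_conj (hF : ContDiff ℝ (⊤ : ℕ∞) F) :
    pds v (fun q => (starRingEnd ℂ) (F q)) p = (starRingEnd ℂ) (pds v F p) := by
  have h := (Complex.conjCLE.toContinuousLinearMap.hasFDerivAt (x := F p)).comp p
    (dAt hF p).hasFDerivAt
  have h' : HasFDerivAt (fun q => (starRingEnd ℂ) (F q))
      (Complex.conjCLE.toContinuousLinearMap.comp (fderiv ℝ F p)) p := h
  simp only [pds]
  rw [h'.fderiv]; rfl

def coordC (k : Fin 2) : E2 →L[ℝ] ℂ :=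
  Complex.ofRealCLM.comp ((ContinuousLinearMap.proj k).comp
    (ContinuousLinearMap.snd ℝ ℝ (Fin 2 → ℝ)))
def timeC : E2 →L[ℝ] ℂ := Complex.ofRealCLM.comp (ContinuousLinearMap.fst ℝ ℝ (Fin 2 → ℝ))

lemma pds_x (k : Fin 2) : pds v (fun q => ((q.2 k : ℝ) : ℂ)) p = (v.2 k : ℂ) := by
  have : (fun q : E2 => ((q.2 k : ℝ) : ℂ)) = coordC k := rfl
  rw [pds, this, ContinuousLinearMap.fderiv]; rfl
lemma pds_time : pds v (fun q => ((q.1 : ℝ) : ℂ)) p = (v.1 : ℂ) := by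
  have : (fun q : E2 => ((q.1 : ℝ) : ℂ)) = timeC := rfl
  rw [pds, this, ContinuousLinearMap.fderiv]; rfl

lemma contDiff_x (k : Fin 2) : ContDiff ℝ (⊤ : ℕ∞) (fun q : E2 => ((q.2 k : ℝ) : ℂ)) :=
  (coordC k).contDiff
lemma contDiff_time : ContDiff ℝ (⊤ : ℕ∞) (fun q : E2 => ((q.1 : ℝ) : ℂ)) := timeC.contDiff

-- slicing lemmas
lemma fderiv_slice {𝔽 : Type*} [NormedAddCommGroup 𝔽] [NormedSpace ℝ 𝔽]
    {f : ℝ → (Fin 2 → ℝ) → 𝔽} (hf : ContDiff ℝ (⊤ : ℕ∞) (Function.uncurry f))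
    (t : ℝ) (x : Fin 2 → ℝ) (w : Fin 2 → ℝ) :
    fderiv ℝ (f t) x w = fderiv ℝ (Function.uncurry f) (t, x) (0, w) := by
  have hu : HasFDerivAt (Function.uncurry f) (fderiv ℝ (Function.uncurry f) (t,x)) (t,x) :=
    ((hf.differentiable (by simp)) (t,x)).hasFDerivAt
  have hi : HasFDerivAt (fun y : Fin 2 → ℝ => ((t, y) : E2))
      (ContinuousLinearMap.inr ℝ ℝ (Fin 2 → ℝ)) x := hasFDerivAt_prodMk_right t x
  have h : HasFDerivAt (f t)
      ((fderiv ℝ (Function.uncurry f) (t,x)).comp (ContinuousLinearMap.inr ℝ ℝ (Fin 2 → ℝ))) x :=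
    hu.comp x hi
  rw [h.fderiv]; rfl
lemma deriv_slice {𝔽 : Type*} [NormedAddCommGroup 𝔽] [NormedSpace ℝ 𝔽]
    {f : ℝ → (Fin 2 → ℝ) → 𝔽} (hf : ContDiff ℝ (⊤ : ℕ∞) (Function.uncurry f))
    (t : ℝ) (x : Fin 2 → ℝ) :
    deriv (fun s => f s x) t = fderiv ℝ (Function.uncurry f) (t, x) (1, 0) := by
  have hu : HasFDerivAt (Function.uncurry f) (fderiv ℝ (Function.uncurry f) (t,x)) (t,x) :=
    ((hf.differentiable (by simp)) (t,x)).hasFDerivAt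
  have hi : HasDerivAt (fun s : ℝ => ((s, x) : E2)) ((1:ℝ), (0 : Fin 2 → ℝ)) t := by
    simpa using (hasDerivAt_id t).prodMk (hasDerivAt_const t x)
  have h := hu.comp_hasDerivAt t hi
  have h' : HasDerivAt (fun s => f s x) (fderiv ℝ (Function.uncurry f) (t, x) (1, 0)) t := h
  rw [h'.deriv]
variable {g h : E2 → ℝ} {v w p : E2}
lemma contDiff_pdr (hg : ContDiff ℝ (⊤ : ℕ∞) g) (v : E2) : ContDiff ℝ (⊤ : ℕ∞) (pdr v g) :=
  (hg.fderiv_right (by simp)).clm_apply contDiff_const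
lemma pdr_sub (hg : ContDiff ℝ (⊤ : ℕ∞) g) (hh : ContDiff ℝ (⊤ : ℕ∞) h) :
    pdr v (fun q => g q - h q) p = pdr v g p - pdr v h p := by
  simp [pdr, fderiv_fun_sub (dAtr hg p) (dAtr hh p)]
lemma pdr_comm (hg : ContDiff ℝ (⊤ : ℕ∞) g) (v w : E2) (p : E2) :
    pdr v (pdr w g) p = pdr w (pdr v g) p := by
  have hs : IsSymmSndFDerivAt ℝ g p := hg.contDiffAt.isSymmSndFDerivAt (by rw [minSmoothness_of_isRCLikeNormedField]; exact WithTop.coe_le_coe.mpr le_top)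
  have h1 : ∀ u u' : E2, fderiv ℝ (fun q => fderiv ℝ g q u) p u'
      = fderiv ℝ (fderiv ℝ g) p u' u := by
    intro u u'
    rw [fderiv_clm_apply (x := p)
      (((hg.fderiv_right (m := (⊤ : ℕ∞)) (by simp)).differentiable (by simp)).differentiableAt)
      (differentiableAt_const u)]
    simp
  show fderiv ℝ (fun q => fderiv ℝ g q w) p v = fderiv ℝ (fun q => fderiv ℝ g q v) p w
  rw [h1, h1]
  exact hs v w
lemma contDiff_conj' {F : E2 → ℂ} (hF : ContDiff ℝ (⊤ : ℕ∞) F) :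
    ContDiff ℝ (⊤ : ℕ∞) (fun q => (starRingEnd ℂ) (F q)) :=
  Complex.conjCLE.toContinuousLinearMap.contDiff.comp hF
lemma contDiff_normSq' {F : E2 → ℂ} (hF : ContDiff ℝ (⊤ : ℕ∞) F) :
    ContDiff ℝ (⊤ : ℕ∞) (fun q => Complex.normSq (F q)) := by
  have : (fun q => Complex.normSq (F q))
      = fun q => (F q).re * (F q).re + (F q).im * (F q).im := by
    funext q; simp [Complex.normSq_apply]
  rw [this]
  exact ((Complex.reCLM.contDiff.comp hF).mul (Complex.reCLM.contDiff.comp hF)).add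
    ((Complex.imCLM.contDiff.comp hF).mul (Complex.imCLM.contDiff.comp hF))

-- Part 2: uncurried operators
def evs (j : Fin 2) : E2 := (0, Pi.single j 1)
def ets : E2 := ((1:ℝ), (0 : Fin 2 → ℝ))
def aU (A : Fin 2 → ℝ → (Fin 2 → ℝ) → ℝ) (j : Fin 2) : E2 → ℝ := Function.uncurry (A j)
def a0u (A0 : ℝ → (Fin 2 → ℝ) → ℝ) : E2 → ℝ := Function.uncurry A0

def DsU (A : Fin 2 → ℝ → (Fin 2 → ℝ) → ℝ) (j : Fin 2) (F : E2 → ℂ) : E2 → ℂ :=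
  fun p => pds (evs j) F p + Complex.I * ((aU A j p : ℝ) : ℂ) * F p
def DtU (A0 : ℝ → (Fin 2 → ℝ) → ℝ) (F : E2 → ℂ) : E2 → ℂ :=
  fun p => pds ets F p + Complex.I * ((a0u A0 p : ℝ) : ℂ) * F p
def LU (A0 : ℝ → (Fin 2 → ℝ) → ℝ) (A : Fin 2 → ℝ → (Fin 2 → ℝ) → ℝ) (F : E2 → ℂ) : E2 → ℂ :=
  fun p => DtU A0 F p - Complex.I * (DsU A 0 (DsU A 0 F) p + DsU A 1 (DsU A 1 F) p)

section Ops
variable {A0 : ℝ → (Fin 2 → ℝ) → ℝ} {A : Fin 2 → ℝ → (Fin 2 → ℝ) → ℝ}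
variable {F G : E2 → ℂ}

lemma haC (hA : ∀ j, ContDiff ℝ (⊤ : ℕ∞) (aU A j)) (j : Fin 2) :
    ContDiff ℝ (⊤ : ℕ∞) (fun p : E2 => ((aU A j p : ℝ) : ℂ)) :=
  Complex.ofRealCLM.contDiff.comp (hA j)
lemma ha0C (hA0 : ContDiff ℝ (⊤ : ℕ∞) (a0u A0)) :
    ContDiff ℝ (⊤ : ℕ∞) (fun p : E2 => ((a0u A0 p : ℝ) : ℂ)) :=
  Complex.ofRealCLM.contDiff.comp hA0

lemma contDiff_DsU (hA : ∀ j, ContDiff ℝ (⊤ : ℕ∞) (aU A j)) (hF : ContDiff ℝ (⊤ : ℕ∞) F) (j : Fin 2) :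
    ContDiff ℝ (⊤ : ℕ∞) (DsU A j F) :=
  (contDiff_pds hF _).add ((contDiff_const.mul (haC hA j)).mul hF)
lemma contDiff_DtU (hA0 : ContDiff ℝ (⊤ : ℕ∞) (a0u A0)) (hF : ContDiff ℝ (⊤ : ℕ∞) F) :
    ContDiff ℝ (⊤ : ℕ∞) (DtU A0 F) :=
  (contDiff_pds hF _).add ((contDiff_const.mul (ha0C hA0)).mul hF)
lemma contDiff_LU (hA0 : ContDiff ℝ (⊤ : ℕ∞) (a0u A0)) (hA : ∀ j, ContDiff ℝ (⊤ : ℕ∞) (aU A j))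
    (hF : ContDiff ℝ (⊤ : ℕ∞) F) : ContDiff ℝ (⊤ : ℕ∞) (LU A0 A F) :=
  (contDiff_DtU hA0 hF).sub (contDiff_const.mul
    ((contDiff_DsU hA (contDiff_DsU hA hF 0) 0).add (contDiff_DsU hA (contDiff_DsU hA hF 1) 1)))

-- M1
lemma pds_DsU (hA : ∀ j, ContDiff ℝ (⊤ : ℕ∞) (aU A j)) (hF : ContDiff ℝ (⊤ : ℕ∞) F) (j : Fin 2) (v : E2) :
    pds v (DsU A j F) = fun p => pds v (pds (evs j) F) p
      + Complex.I * ((pdr v (aU A j) p : ℝ) : ℂ) * F p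
      + Complex.I * ((aU A j p : ℝ) : ℂ) * pds v F p := by
  funext p
  have hIa : ContDiff ℝ (⊤ : ℕ∞) (fun q : E2 => Complex.I * ((aU A j q : ℝ) : ℂ)) :=
    contDiff_const.mul (haC hA j)
  show pds v (fun q => pds (evs j) F q + Complex.I * ((aU A j q : ℝ) : ℂ) * F q) p = _
  rw [pds_add (contDiff_pds hF (evs j)) (hIa.mul hF), pds_mul hIa hF,
    pds_const_mul (haC hA j) Complex.I, pds_ofReal (hA j)]
  ring

-- M2
lemma pds_DtU (hA0 : ContDiff ℝ (⊤ : ℕ∞) (a0u A0)) (hF : ContDiff ℝ (⊤ : ℕ∞) F) (v : E2) :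
    pds v (DtU A0 F) = fun p => pds v (pds ets F) p
      + Complex.I * ((pdr v (a0u A0) p : ℝ) : ℂ) * F p
      + Complex.I * ((a0u A0 p : ℝ) : ℂ) * pds v F p := by
  funext p
  have hIa : ContDiff ℝ (⊤ : ℕ∞) (fun q : E2 => Complex.I * ((a0u A0 q : ℝ) : ℂ)) :=
    contDiff_const.mul (ha0C hA0)
  show pds v (fun q => pds ets F q + Complex.I * ((a0u A0 q : ℝ) : ℂ) * F q) p = _
  rw [pds_add (contDiff_pds hF ets) (hIa.mul hF), pds_mul hIa hF,
    pds_const_mul (ha0C hA0) Complex.I, pds_ofReal hA0]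
  ring

-- M5
lemma pds_pds_DsU (hA : ∀ j, ContDiff ℝ (⊤ : ℕ∞) (aU A j)) (hF : ContDiff ℝ (⊤ : ℕ∞) F)
    (j : Fin 2) (v w : E2) (p : E2) :
    pds w (pds v (DsU A j F)) p = pds w (pds v (pds (evs j) F)) p
      + Complex.I * ((pdr w (pdr v (aU A j)) p : ℝ) : ℂ) * F p
      + Complex.I * ((pdr v (aU A j) p : ℝ) : ℂ) * pds w F p
      + Complex.I * ((pdr w (aU A j) p : ℝ) : ℂ) * pds v F p
      + Complex.I * ((aU A j p : ℝ) : ℂ) * pds w (pds v F) p := by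
  have h1' : ContDiff ℝ (⊤ : ℕ∞) (fun q : E2 => ((pdr v (aU A j) q : ℝ) : ℂ)) :=
    Complex.ofRealCLM.contDiff.comp (contDiff_pdr (hA j) v)
  have h1 : ContDiff ℝ (⊤ : ℕ∞) (fun q : E2 => Complex.I * ((pdr v (aU A j) q : ℝ) : ℂ)) :=
    contDiff_const.mul h1'
  have h2 : ContDiff ℝ (⊤ : ℕ∞) (fun q : E2 => Complex.I * ((aU A j q : ℝ) : ℂ)) :=
    contDiff_const.mul (haC hA j)
  rw [pds_DsU hA hF j v]
  rw [pds_add (F := fun q => pds v (pds (evs j) F) q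
        + Complex.I * ((pdr v (aU A j) q : ℝ) : ℂ) * F q)
      (G := fun q => Complex.I * ((aU A j q : ℝ) : ℂ) * pds v F q)
      ((contDiff_pds (contDiff_pds hF (evs j)) v).add (h1.mul hF))
      (h2.mul (contDiff_pds hF v)),
    pds_add (contDiff_pds (contDiff_pds hF (evs j)) v) (h1.mul hF),
    pds_mul h1 hF, pds_mul h2 (contDiff_pds hF v),
    pds_const_mul h1' Complex.I,
    pds_const_mul (haC hA j) Complex.I,
    pds_ofReal (contDiff_pdr (hA j) v), pds_ofReal (hA j)]
  ring

-- M3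
lemma DsU_DsU (hA : ∀ j, ContDiff ℝ (⊤ : ℕ∞) (aU A j)) (hF : ContDiff ℝ (⊤ : ℕ∞) F)
    (ℓ j : Fin 2) (p : E2) :
    DsU A ℓ (DsU A j F) p = pds (evs ℓ) (pds (evs j) F) p
      + Complex.I * ((pdr (evs ℓ) (aU A j) p : ℝ) : ℂ) * F p
      + Complex.I * ((aU A j p : ℝ) : ℂ) * pds (evs ℓ) F p
      + Complex.I * ((aU A ℓ p : ℝ) : ℂ) * pds (evs j) F p
      + Complex.I * ((aU A ℓ p : ℝ) : ℂ) * (Complex.I * ((aU A j p : ℝ) : ℂ)) * F p := by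
  show pds (evs ℓ) (DsU A j F) p + Complex.I * ((aU A ℓ p : ℝ) : ℂ) * (DsU A j F p) = _
  rw [pds_DsU hA hF j (evs ℓ)]
  show _ + Complex.I * ((aU A ℓ p : ℝ) : ℂ)
    * (pds (evs j) F p + Complex.I * ((aU A j p : ℝ) : ℂ) * F p) = _
  ring

lemma pds_comm_fun (hF : ContDiff ℝ (⊤ : ℕ∞) F) (v w : E2) :
    pds v (pds w F) = pds w (pds v F) := funext (pds_comm hF v w)

-- additivity of LU etc.
lemma DsU_add (hA : ∀ j, ContDiff ℝ (⊤ : ℕ∞) (aU A j)) (hF : ContDiff ℝ (⊤ : ℕ∞) F) (hG : ContDiff ℝ (⊤ : ℕ∞) G)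
    (j : Fin 2) :
    DsU A j (fun q => F q + G q) = fun q => DsU A j F q + DsU A j G q := by
  funext p
  show pds (evs j) (fun q => F q + G q) p + _ = _
  rw [pds_add hF hG]
  show _ = pds (evs j) F p + _ + (pds (evs j) G p + _)
  ring

lemma LU_add (hA0 : ContDiff ℝ (⊤ : ℕ∞) (a0u A0)) (hA : ∀ j, ContDiff ℝ (⊤ : ℕ∞) (aU A j))
    (hF : ContDiff ℝ (⊤ : ℕ∞) F) (hG : ContDiff ℝ (⊤ : ℕ∞) G) (p : E2) :
    LU A0 A (fun q => F q + G q) p = LU A0 A F p + LU A0 A G p := by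
  have h0 : ∀ ℓ, DsU A ℓ (DsU A ℓ (fun q => F q + G q)) p
      = DsU A ℓ (DsU A ℓ F) p + DsU A ℓ (DsU A ℓ G) p := by
    intro ℓ
    rw [DsU_add hA hF hG ℓ, DsU_add hA (contDiff_DsU hA hF ℓ) (contDiff_DsU hA hG ℓ) ℓ]
  have ht : DtU A0 (fun q => F q + G q) p = DtU A0 F p + DtU A0 G p := by
    show pds ets (fun q => F q + G q) p + _ = _
    rw [pds_add hF hG]
    show _ = pds ets F p + _ + (pds ets G p + _)
    ring
  show DtU A0 (fun q => F q + G q) p - Complex.I * (_ + _) = _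
  rw [ht, h0 0, h0 1]
  show _ = DtU A0 F p - _ + (DtU A0 G p - _)
  ring
end Ops

-- Part 3: bridging curried/uncurried
section Bridge
variable {A0 : ℝ → (Fin 2 → ℝ) → ℝ} {A : Fin 2 → ℝ → (Fin 2 → ℝ) → ℝ}
variable {f : ℝ → (Fin 2 → ℝ) → ℂ}

lemma pds_slice (hf : ContDiff ℝ (⊤ : ℕ∞) (Function.uncurry f)) (j : Fin 2) (t : ℝ) (x : Fin 2 → ℝ) :
    fderiv ℝ (f t) x (Pi.single j 1) = pds (evs j) (Function.uncurry f) (t, x) := by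
  rw [fderiv_slice hf t x (Pi.single j 1)]; rfl

lemma pds_slice_t (hf : ContDiff ℝ (⊤ : ℕ∞) (Function.uncurry f)) (t : ℝ) (x : Fin 2 → ℝ) :
    deriv (fun s => f s x) t = pds ets (Function.uncurry f) (t, x) := by
  rw [deriv_slice hf t x]; rfl

lemma pdr_slice {g : ℝ → (Fin 2 → ℝ) → ℝ} (hg : ContDiff ℝ (⊤ : ℕ∞) (Function.uncurry g))
    (j : Fin 2) (t : ℝ) (x : Fin 2 → ℝ) :
    fderiv ℝ (g t) x (Pi.single j 1) = pdr (evs j) (Function.uncurry g) (t, x) := by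
  rw [fderiv_slice hg t x (Pi.single j 1)]; rfl

lemma pdr_slice_t {g : ℝ → (Fin 2 → ℝ) → ℝ} (hg : ContDiff ℝ (⊤ : ℕ∞) (Function.uncurry g))
    (t : ℝ) (x : Fin 2 → ℝ) :
    deriv (fun s => g s x) t = pdr ets (Function.uncurry g) (t, x) := by
  rw [deriv_slice hg t x]; rfl
end Bridge

-- Part 4: easy commutation lemmas
section Easy
variable {A0 : ℝ → (Fin 2 → ℝ) → ℝ} {A : Fin 2 → ℝ → (Fin 2 → ℝ) → ℝ}
variable {F G : E2 → ℂ}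

lemma single_comb (k : Fin 2) (u : Fin 2 → ℂ) :
    (((Pi.single 0 1 : Fin 2 → ℝ) k) : ℂ) * u 0 + (((Pi.single 1 1 : Fin 2 → ℝ) k) : ℂ) * u 1
      = u k := by
  fin_cases k <;> simp

lemma DsU_xmul (hA : ∀ j, ContDiff ℝ (⊤ : ℕ∞) (aU A j)) (hF : ContDiff ℝ (⊤ : ℕ∞) F) (j k : Fin 2) :
    DsU A j (fun q => ((q.2 k : ℝ) : ℂ) * F q)
      = fun q => (((Pi.single j 1 : Fin 2 → ℝ) k) : ℂ) * F q + ((q.2 k : ℝ) : ℂ) * DsU A j F q := by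
  funext p
  show pds (evs j) (fun q => ((q.2 k : ℝ) : ℂ) * F q) p + _ = _
  rw [pds_mul (contDiff_x k) hF, pds_x k]
  show _ = _ + ((p.2 k : ℝ) : ℂ) * (pds (evs j) F p + Complex.I * ((aU A j p : ℝ) : ℂ) * F p)
  have : ((evs j).2 k : ℂ) = (((Pi.single j 1 : Fin 2 → ℝ) k) : ℂ) := rfl
  rw [this]; ring

lemma contDiff_xmul (hF : ContDiff ℝ (⊤ : ℕ∞) F) (k : Fin 2) :
    ContDiff ℝ (⊤ : ℕ∞) (fun q : E2 => ((q.2 k : ℝ) : ℂ) * F q) := (contDiff_x k).mul hF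

lemma DsU_cmul (hA : ∀ j, ContDiff ℝ (⊤ : ℕ∞) (aU A j)) (hF : ContDiff ℝ (⊤ : ℕ∞) F) (j : Fin 2) (c : ℂ) :
    DsU A j (fun q => c * F q) = fun q => c * DsU A j F q := by
  funext p
  show pds (evs j) (fun q => c * F q) p + _ = _
  rw [pds_const_mul hF c]
  show _ = c * (pds (evs j) F p + Complex.I * ((aU A j p : ℝ) : ℂ) * F p)
  ring

-- Lemma A : LU (x_k F) = x_k LU F - 2i D_k F
lemma lemA (hA0 : ContDiff ℝ (⊤ : ℕ∞) (a0u A0)) (hA : ∀ j, ContDiff ℝ (⊤ : ℕ∞) (aU A j))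
    (hF : ContDiff ℝ (⊤ : ℕ∞) F) (k : Fin 2) (p : E2) :
    LU A0 A (fun q => ((q.2 k : ℝ) : ℂ) * F q) p
      = ((p.2 k : ℝ) : ℂ) * LU A0 A F p - 2 * Complex.I * DsU A k F p := by
  have hX : ContDiff ℝ (⊤ : ℕ∞) (fun q : E2 => ((q.2 k : ℝ) : ℂ) * F q) := contDiff_xmul hF k
  have hDD : ∀ ℓ, DsU A ℓ (DsU A ℓ (fun q => ((q.2 k : ℝ) : ℂ) * F q)) p
      = 2 * (((Pi.single ℓ 1 : Fin 2 → ℝ) k) : ℂ) * DsU A ℓ F p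
        + ((p.2 k : ℝ) : ℂ) * DsU A ℓ (DsU A ℓ F) p := by
    intro ℓ
    rw [DsU_xmul hA hF ℓ k,
      DsU_add hA (contDiff_const.mul hF) (contDiff_xmul (contDiff_DsU hA hF ℓ) k) ℓ,
      DsU_cmul hA hF ℓ, DsU_xmul hA (contDiff_DsU hA hF ℓ) ℓ k]
    ring
  have hT : DtU A0 (fun q => ((q.2 k : ℝ) : ℂ) * F q) p = ((p.2 k : ℝ) : ℂ) * DtU A0 F p := by
    show pds ets (fun q => ((q.2 k : ℝ) : ℂ) * F q) p + _ = _
    rw [pds_mul (contDiff_x k) hF, pds_x k]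
    show _ = ((p.2 k : ℝ) : ℂ) * (pds ets F p + Complex.I * ((a0u A0 p : ℝ) : ℂ) * F p)
    have : ((ets.2 k : ℝ) : ℂ) = 0 := by
      show (((0 : Fin 2 → ℝ) k : ℝ) : ℂ) = 0; simp
    rw [this]; ring
  show DtU A0 _ p - Complex.I * (_ + _) = _
  rw [hT, hDD 0, hDD 1]
  have hcomb := single_comb k (fun ℓ => DsU A ℓ F p)
  show _ = ((p.2 k : ℝ) : ℂ) * (DtU A0 F p - Complex.I * (DsU A 0 (DsU A 0 F) p + DsU A 1 (DsU A 1 F) p)) - 2 * Complex.I * DsU A k F p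
  rw [← hcomb]
  ring

-- Lemma B : LU (2 i t G) = 2 i t LU G + 2 i G
lemma DsU_tmul (hA : ∀ j, ContDiff ℝ (⊤ : ℕ∞) (aU A j)) (hF : ContDiff ℝ (⊤ : ℕ∞) F) (j : Fin 2) :
    DsU A j (fun q => 2 * Complex.I * ((q.1 : ℝ) : ℂ) * F q)
      = fun q => 2 * Complex.I * ((q.1 : ℝ) : ℂ) * DsU A j F q := by
  funext p
  have h2 : ContDiff ℝ (⊤ : ℕ∞) (fun q : E2 => 2 * Complex.I * ((q.1 : ℝ) : ℂ)) :=
    contDiff_const.mul contDiff_time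
  show pds (evs j) (fun q => (2 * Complex.I * ((q.1 : ℝ) : ℂ)) * F q) p + _ = _
  rw [pds_mul h2 hF, pds_const_mul contDiff_time (2 * Complex.I), pds_time]
  have : ((evs j).1 : ℂ) = 0 := by show ((0:ℝ) : ℂ) = 0; simp
  rw [this]
  show _ = 2 * Complex.I * ((p.1 : ℝ) : ℂ)
    * (pds (evs j) F p + Complex.I * ((aU A j p : ℝ) : ℂ) * F p)
  ring

lemma lemB (hA0 : ContDiff ℝ (⊤ : ℕ∞) (a0u A0)) (hA : ∀ j, ContDiff ℝ (⊤ : ℕ∞) (aU A j))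
    (hF : ContDiff ℝ (⊤ : ℕ∞) F) (p : E2) :
    LU A0 A (fun q => 2 * Complex.I * ((q.1 : ℝ) : ℂ) * F q) p
      = 2 * Complex.I * ((p.1 : ℝ) : ℂ) * LU A0 A F p + 2 * Complex.I * F p := by
  have h2 : ContDiff ℝ (⊤ : ℕ∞) (fun q : E2 => 2 * Complex.I * ((q.1 : ℝ) : ℂ)) :=
    contDiff_const.mul contDiff_time
  have hDD : ∀ ℓ, DsU A ℓ (DsU A ℓ (fun q => 2 * Complex.I * ((q.1 : ℝ) : ℂ) * F q)) p
      = 2 * Complex.I * ((p.1 : ℝ) : ℂ) * DsU A ℓ (DsU A ℓ F) p := by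
    intro ℓ
    rw [DsU_tmul hA hF ℓ, DsU_tmul hA (contDiff_DsU hA hF ℓ) ℓ]
  have hT : DtU A0 (fun q => 2 * Complex.I * ((q.1 : ℝ) : ℂ) * F q) p
      = 2 * Complex.I * ((p.1 : ℝ) : ℂ) * DtU A0 F p + 2 * Complex.I * F p := by
    show pds ets (fun q => (2 * Complex.I * ((q.1 : ℝ) : ℂ)) * F q) p + _ = _
    rw [pds_mul h2 hF, pds_const_mul contDiff_time (2 * Complex.I), pds_time]
    have : ((ets.1 : ℝ) : ℂ) = 1 := by show ((1:ℝ) : ℂ) = 1; simp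
    rw [this]
    show _ = 2 * Complex.I * ((p.1 : ℝ) : ℂ)
      * (pds ets F p + Complex.I * ((a0u A0 p : ℝ) : ℂ) * F p) + 2 * Complex.I * F p
    ring
  show DtU A0 _ p - Complex.I * (_ + _) = _
  rw [hT, hDD 0, hDD 1]
  show _ = 2 * Complex.I * ((p.1 : ℝ) : ℂ) * (DtU A0 F p - Complex.I * (DsU A 0 (DsU A 0 F) p + DsU A 1 (DsU A 1 F) p)) + 2 * Complex.I * F p
  ring
end Easy

section LemC
variable {A0 : ℝ → (Fin 2 → ℝ) → ℝ} {A : Fin 2 → ℝ → (Fin 2 → ℝ) → ℝ}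
variable {Φ Ψ F : E2 → ℂ}

lemma DsU_apply (A : Fin 2 → ℝ → (Fin 2 → ℝ) → ℝ) (j : Fin 2) (F : E2 → ℂ) (p : E2) :
    DsU A j F p = pds (evs j) F p + Complex.I * ((aU A j p : ℝ) : ℂ) * F p := rfl
lemma DtU_apply (A0 : ℝ → (Fin 2 → ℝ) → ℝ) (F : E2 → ℂ) (p : E2) :
    DtU A0 F p = pds ets F p + Complex.I * ((a0u A0 p : ℝ) : ℂ) * F p := rfl
lemma LU_apply (A0 : ℝ → (Fin 2 → ℝ) → ℝ) (A : Fin 2 → ℝ → (Fin 2 → ℝ) → ℝ)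
    (F : E2 → ℂ) (p : E2) :
    LU A0 A F p = DtU A0 F p
      - Complex.I * (DsU A 0 (DsU A 0 F) p + DsU A 1 (DsU A 1 F) p) := rfl

lemma pds_DsU_pt (hA : ∀ j, ContDiff ℝ (⊤ : ℕ∞) (aU A j)) (hF : ContDiff ℝ (⊤ : ℕ∞) F)
    (j : Fin 2) (v : E2) (p : E2) :
    pds v (DsU A j F) p = pds v (pds (evs j) F) p
      + Complex.I * ((pdr v (aU A j) p : ℝ) : ℂ) * F p
      + Complex.I * ((aU A j p : ℝ) : ℂ) * pds v F p := congrFun (pds_DsU hA hF j v) p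

lemma pds_DtU_pt (hA0 : ContDiff ℝ (⊤ : ℕ∞) (a0u A0)) (hF : ContDiff ℝ (⊤ : ℕ∞) F) (v : E2) (p : E2) :
    pds v (DtU A0 F) p = pds v (pds ets F) p
      + Complex.I * ((pdr v (a0u A0) p : ℝ) : ℂ) * F p
      + Complex.I * ((a0u A0 p : ℝ) : ℂ) * pds v F p := congrFun (pds_DtU hA0 hF v) p

lemma pds_LU_pt (hA0 : ContDiff ℝ (⊤ : ℕ∞) (a0u A0)) (hA : ∀ j, ContDiff ℝ (⊤ : ℕ∞) (aU A j))
    (hF : ContDiff ℝ (⊤ : ℕ∞) F) (v : E2) (p : E2) :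
    pds v (LU A0 A F) p = pds v (DtU A0 F) p
      - Complex.I * (pds v (DsU A 0 (DsU A 0 F)) p + pds v (DsU A 1 (DsU A 1 F)) p) := by
  have hDD : ∀ ℓ, ContDiff ℝ (⊤ : ℕ∞) (DsU A ℓ (DsU A ℓ F)) :=
    fun ℓ => contDiff_DsU hA (contDiff_DsU hA hF ℓ) ℓ
  have hsum : ContDiff ℝ (⊤ : ℕ∞) (fun q : E2 => DsU A 0 (DsU A 0 F) q + DsU A 1 (DsU A 1 F) q) :=
    (hDD 0).add (hDD 1)
  show pds v (fun q => DtU A0 F q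
    - Complex.I * (DsU A 0 (DsU A 0 F) q + DsU A 1 (DsU A 1 F) q)) p = _
  rw [pds_sub (contDiff_DtU hA0 hF) (contDiff_const.mul hsum),
    pds_const_mul hsum Complex.I, pds_add (hDD 0) (hDD 1)]

-- derivative of the F₁₂ constraint
lemma hd12 (hA : ∀ j, ContDiff ℝ (⊤ : ℕ∞) (aU A j)) (hΦ : ContDiff ℝ (⊤ : ℕ∞) Φ)
    (h12u : ∀ q, pdr (evs 0) (aU A 1) q - pdr (evs 1) (aU A 0) q
      = -(1/2) * Complex.normSq (Φ q)) (v : E2) (p : E2) :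
    ((pdr v (pdr (evs 0) (aU A 1)) p : ℝ) : ℂ) = ((pdr v (pdr (evs 1) (aU A 0)) p : ℝ) : ℂ)
      - (1/2) * (pds v Φ p * (starRingEnd ℂ) (Φ p) + Φ p * (starRingEnd ℂ) (pds v Φ p)) := by
  have hfun : (fun q => pdr (evs 0) (aU A 1) q - pdr (evs 1) (aU A 0) q)
      = fun q => -(1/2) * Complex.normSq (Φ q) := funext h12u
  have h1 : pdr v (fun q => pdr (evs 0) (aU A 1) q - pdr (evs 1) (aU A 0) q) p
      = pdr v (fun q => -(1/2) * Complex.normSq (Φ q)) p := by rw [hfun]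
  rw [pdr_sub (contDiff_pdr (hA 1) (evs 0)) (contDiff_pdr (hA 0) (evs 1))] at h1
  have hns : ContDiff ℝ (⊤ : ℕ∞) (fun q : E2 => -(1/2) * Complex.normSq (Φ q)) :=
    contDiff_const.mul (contDiff_normSq' hΦ)
  have h2 : (↑(pdr v (fun q => -(1/2) * Complex.normSq (Φ q)) p) : ℂ)
      = pds v (fun q => ((-(1/2) * Complex.normSq (Φ q) : ℝ) : ℂ)) p := (pds_ofReal hns).symm
  have h3 : (fun q : E2 => ((-(1/2) * Complex.normSq (Φ q) : ℝ) : ℂ))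
      = fun q => -(1/2 : ℂ) * (Φ q * (starRingEnd ℂ) (Φ q)) := by
    funext q
    rw [Complex.mul_conj]
    push_cast
    try rfl
    try ring
  have h4 : pds v (fun q => -(1/2:ℂ) * (Φ q * (starRingEnd ℂ) (Φ q))) p
      = -(1/2:ℂ) * (pds v Φ p * (starRingEnd ℂ) (Φ p) + Φ p * (starRingEnd ℂ) (pds v Φ p)) := by
    rw [pds_const_mul (hΦ.mul (contDiff_conj' hΦ)) (-(1/2:ℂ)),
      pds_mul hΦ (contDiff_conj' hΦ), pds_conj hΦ]
    try ring
  have h5 := congrArg (fun r : ℝ => (r : ℂ)) h1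
  push_cast at h5
  rw [h2, h3, h4] at h5
  linear_combination h5

lemma lemC0 (hA0 : ContDiff ℝ (⊤ : ℕ∞) (a0u A0)) (hA : ∀ j, ContDiff ℝ (⊤ : ℕ∞) (aU A j))
    (hΦ : ContDiff ℝ (⊤ : ℕ∞) Φ) (hΨ : ContDiff ℝ (⊤ : ℕ∞) Ψ)
    (h12u : ∀ q, pdr (evs 0) (aU A 1) q - pdr (evs 1) (aU A 0) q
      = -(1/2) * Complex.normSq (Φ q))
    (h01u : ∀ q, ((pdr ets (aU A 0) q - pdr (evs 0) (a0u A0) q : ℝ) : ℂ)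
      = -(Complex.I/2) * (Φ q * (starRingEnd ℂ) (DsU A 1 Φ q)
          - DsU A 1 Φ q * (starRingEnd ℂ) (Φ q))) (p : E2) :
    LU A0 A (DsU A 0 Ψ) p = DsU A 0 (LU A0 A Ψ) p
      + ((Complex.normSq (Φ p) : ℂ) * DsU A 1 Ψ p
         + Φ p * (starRingEnd ℂ) (DsU A 1 Φ p) * Ψ p) := by
  have hD : ∀ ℓ, ContDiff ℝ (⊤ : ℕ∞) (DsU A ℓ Ψ) := fun ℓ => contDiff_DsU hA hΨ ℓ
  -- hypothesis substitutions in atomic form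
  have h01 := h01u p
  rw [DsU_apply A 1 Φ p] at h01
  simp only [map_add, map_mul, Complex.conj_I, Complex.conj_ofReal] at h01
  push_cast at h01
  have e1C : ((pdr ets (aU A 0) p : ℝ) : ℂ) = ((pdr (evs 0) (a0u A0) p : ℝ) : ℂ)
      - (Complex.I/2) * (Φ p * ((starRingEnd ℂ) (pds (evs 1) Φ p)
          - Complex.I * ((aU A 1 p : ℝ) : ℂ) * (starRingEnd ℂ) (Φ p))
        - (pds (evs 1) Φ p + Complex.I * ((aU A 1 p : ℝ) : ℂ) * Φ p)
          * (starRingEnd ℂ) (Φ p)) := by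
    linear_combination h01
  have h12C := congrArg (fun r : ℝ => (r : ℂ)) (h12u p)
  push_cast at h12C
  have e3C : ((pdr (evs 0) (aU A 1) p : ℝ) : ℂ) = ((pdr (evs 1) (aU A 0) p : ℝ) : ℂ)
      - (1/2) * ((Complex.normSq (Φ p) : ℝ) : ℂ) := by linear_combination h12C
  have e4C := hd12 hA hΦ h12u (evs 1) p
  -- expand LHS
  rw [LU_apply A0 A (DsU A 0 Ψ) p, DtU_apply A0 (DsU A 0 Ψ) p,
    DsU_DsU hA (hD 0) 0 0 p, DsU_DsU hA (hD 0) 1 1 p,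
    -- expand RHS operator part
    DsU_apply A 0 (LU A0 A Ψ) p, pds_LU_pt hA0 hA hΨ (evs 0) p,
    pds_DtU_pt hA0 hΨ (evs 0) p,
    pds_DsU_pt hA (hD 0) 0 (evs 0) p, pds_DsU_pt hA (hD 1) 1 (evs 0) p,
    -- second order pds of DsU
    pds_pds_DsU hA hΨ 0 (evs 0) (evs 0) p, pds_pds_DsU hA hΨ 0 (evs 1) (evs 1) p,
    pds_pds_DsU hA hΨ 1 (evs 1) (evs 0) p,
    -- first order pds of DsU
    pds_DsU_pt hA hΨ 0 ets p, pds_DsU_pt hA hΨ 0 (evs 0) p, pds_DsU_pt hA hΨ 0 (evs 1) p,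
    pds_DsU_pt hA hΨ 1 (evs 0) p,
    -- leftover LU Ψ p value
    LU_apply A0 A Ψ p, DtU_apply A0 Ψ p, DsU_DsU hA hΨ 0 0 p, DsU_DsU hA hΨ 1 1 p,
    -- leftover DsU values
    DsU_apply A 0 Ψ p, DsU_apply A 1 Ψ p, DsU_apply A 1 Φ p]
  -- expand conjugates
  simp only [map_add, map_mul, Complex.conj_I, Complex.conj_ofReal]
  -- commute mixed partials to canonical order
  rw [pds_comm_fun hΨ ets (evs 0), pds_comm_fun hΨ (evs 1) (evs 0),
    pds_comm (contDiff_pds hΨ (evs 1)) (evs 1) (evs 0) p,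
    pdr_comm (hA 1) (evs 0) (evs 1) p]
  -- substitute curvature hypotheses and close by ring
  rw [e1C, e4C, e3C, ← Complex.mul_conj]
  have i2 : Complex.I ^ 2 = -1 := Complex.I_sq
  have i3 : Complex.I ^ 3 = -Complex.I := by rw [pow_succ, i2]; ring
  have i4 : Complex.I ^ 4 = 1 := by rw [pow_succ, i3]; simp
  have i5 : Complex.I ^ 5 = Complex.I := by rw [pow_succ, i4]; ring
  have i6 : Complex.I ^ 6 = -1 := by rw [pow_succ, i5]; simp [Complex.I_sq]
  ring_nf
  simp only [i2, i3, i4, i5, i6]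
  ring
end LemC

section LemC1
variable {A0 : ℝ → (Fin 2 → ℝ) → ℝ} {A : Fin 2 → ℝ → (Fin 2 → ℝ) → ℝ}
variable {Φ Ψ : E2 → ℂ}

lemma lemC1 (hA0 : ContDiff ℝ (⊤ : ℕ∞) (a0u A0)) (hA : ∀ j, ContDiff ℝ (⊤ : ℕ∞) (aU A j))
    (hΦ : ContDiff ℝ (⊤ : ℕ∞) Φ) (hΨ : ContDiff ℝ (⊤ : ℕ∞) Ψ)
    (h12u : ∀ q, pdr (evs 0) (aU A 1) q - pdr (evs 1) (aU A 0) q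
      = -(1/2) * Complex.normSq (Φ q))
    (h02u : ∀ q, ((pdr ets (aU A 1) q - pdr (evs 1) (a0u A0) q : ℝ) : ℂ)
      = (Complex.I/2) * (Φ q * (starRingEnd ℂ) (DsU A 0 Φ q)
          - DsU A 0 Φ q * (starRingEnd ℂ) (Φ q))) (p : E2) :
    LU A0 A (DsU A 1 Ψ) p = DsU A 1 (LU A0 A Ψ) p
      - ((Complex.normSq (Φ p) : ℂ) * DsU A 0 Ψ p
         + Φ p * (starRingEnd ℂ) (DsU A 0 Φ p) * Ψ p) := by
  have hD : ∀ ℓ, ContDiff ℝ (⊤ : ℕ∞) (DsU A ℓ Ψ) := fun ℓ => contDiff_DsU hA hΨ ℓ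
  have h02 := h02u p
  rw [DsU_apply A 0 Φ p] at h02
  simp only [map_add, map_mul, Complex.conj_I, Complex.conj_ofReal] at h02
  push_cast at h02
  have e2C : ((pdr ets (aU A 1) p : ℝ) : ℂ) = ((pdr (evs 1) (a0u A0) p : ℝ) : ℂ)
      + (Complex.I/2) * (Φ p * ((starRingEnd ℂ) (pds (evs 0) Φ p)
          - Complex.I * ((aU A 0 p : ℝ) : ℂ) * (starRingEnd ℂ) (Φ p))
        - (pds (evs 0) Φ p + Complex.I * ((aU A 0 p : ℝ) : ℂ) * Φ p)
          * (starRingEnd ℂ) (Φ p)) := by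
    linear_combination h02
  have h12C := congrArg (fun r : ℝ => (r : ℂ)) (h12u p)
  push_cast at h12C
  have e3C : ((pdr (evs 0) (aU A 1) p : ℝ) : ℂ) = ((pdr (evs 1) (aU A 0) p : ℝ) : ℂ)
      - (1/2) * ((Complex.normSq (Φ p) : ℝ) : ℂ) := by linear_combination h12C
  have e4C := hd12 hA hΦ h12u (evs 0) p
  rw [pdr_comm (hA 0) (evs 0) (evs 1) p] at e4C
  rw [LU_apply A0 A (DsU A 1 Ψ) p, DtU_apply A0 (DsU A 1 Ψ) p,
    DsU_DsU hA (hD 1) 0 0 p, DsU_DsU hA (hD 1) 1 1 p,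
    DsU_apply A 1 (LU A0 A Ψ) p, pds_LU_pt hA0 hA hΨ (evs 1) p,
    pds_DtU_pt hA0 hΨ (evs 1) p,
    pds_DsU_pt hA (hD 0) 0 (evs 1) p, pds_DsU_pt hA (hD 1) 1 (evs 1) p,
    pds_pds_DsU hA hΨ 1 (evs 0) (evs 0) p, pds_pds_DsU hA hΨ 1 (evs 1) (evs 1) p,
    pds_pds_DsU hA hΨ 0 (evs 0) (evs 1) p,
    pds_DsU_pt hA hΨ 1 ets p, pds_DsU_pt hA hΨ 1 (evs 0) p, pds_DsU_pt hA hΨ 1 (evs 1) p,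
    pds_DsU_pt hA hΨ 0 (evs 1) p,
    LU_apply A0 A Ψ p, DtU_apply A0 Ψ p, DsU_DsU hA hΨ 0 0 p, DsU_DsU hA hΨ 1 1 p,
    DsU_apply A 1 Ψ p, DsU_apply A 0 Ψ p, DsU_apply A 0 Φ p]
  simp only [map_add, map_mul, Complex.conj_I, Complex.conj_ofReal]
  rw [pds_comm_fun hΨ ets (evs 1), pds_comm_fun hΨ (evs 0) (evs 1),
    pds_comm (contDiff_pds hΨ (evs 0)) (evs 0) (evs 1) p]
  rw [e2C, e4C, e3C, ← Complex.mul_conj]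
  have i2 : Complex.I ^ 2 = -1 := Complex.I_sq
  have i3 : Complex.I ^ 3 = -Complex.I := by rw [pow_succ, i2]; ring
  have i4 : Complex.I ^ 4 = 1 := by rw [pow_succ, i3]; simp
  have i5 : Complex.I ^ 5 = Complex.I := by rw [pow_succ, i4]; ring
  have i6 : Complex.I ^ 6 = -1 := by rw [pow_succ, i5]; simp [Complex.I_sq]
  ring_nf
  simp only [i2, i3, i4, i5, i6]
  ring
end LemC1

section MainBridge
variable {A0 : ℝ → (Fin 2 → ℝ) → ℝ} {A : Fin 2 → ℝ → (Fin 2 → ℝ) → ℝ}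
variable {f : ℝ → (Fin 2 → ℝ) → ℂ}

lemma DcovSp_eq (hf : ContDiff ℝ (⊤ : ℕ∞) (Function.uncurry f)) (j : Fin 2) (t : ℝ) (x : Fin 2 → ℝ) :
    DcovSp A j f t x = DsU A j (Function.uncurry f) (t, x) := by
  show fderiv ℝ (f t) x (Pi.single j 1) + Complex.I * (A j t x) * f t x = _
  rw [pds_slice hf j t x]
  rfl

lemma uncurry_DcovSp (hf : ContDiff ℝ (⊤ : ℕ∞) (Function.uncurry f)) (j : Fin 2) :
    Function.uncurry (DcovSp A j f) = DsU A j (Function.uncurry f) := by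
  funext q
  obtain ⟨t, x⟩ := q
  exact DcovSp_eq hf j t x

lemma covSchOp_eq (hA : ∀ j, ContDiff ℝ (⊤ : ℕ∞) (aU A j)) (hf : ContDiff ℝ (⊤ : ℕ∞) (Function.uncurry f))
    (t : ℝ) (x : Fin 2 → ℝ) :
    covSchOp A0 A f t x = LU A0 A (Function.uncurry f) (t, x) := by
  have hDs : ∀ ℓ, ContDiff ℝ (⊤ : ℕ∞) (Function.uncurry (DcovSp A ℓ f)) := fun ℓ => by
    rw [uncurry_DcovSp hf ℓ]; exact contDiff_DsU hA hf ℓ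
  show deriv (fun s => f s x) t + Complex.I * (A0 t x) * f t x
      - Complex.I * (∑ ℓ : Fin 2, DcovSp A ℓ (DcovSp A ℓ f) t x) = _
  rw [pds_slice_t hf t x, Fin.sum_univ_two,
    DcovSp_eq (hDs 0) 0 t x, DcovSp_eq (hDs 1) 1 t x,
    uncurry_DcovSp hf 0, uncurry_DcovSp hf 1]
  rfl
end MainBridge



/-- Commutation formula for `J_k = x_k + 2it D_k` with the covariant Schrödinger operator, under the
Chern–Simons–Schrödinger curvature constraints. -/
theorem comm_Jcov_covSchOp
    (A0 : ℝ → (Fin 2 → ℝ) → ℝ) (A : Fin 2 → ℝ → (Fin 2 → ℝ) → ℝ)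
    (φ ψ : ℝ → (Fin 2 → ℝ) → ℂ)
    (hA0 : ContDiff ℝ (⊤ : ℕ∞) (Function.uncurry A0))
    (hA : ∀ j, ContDiff ℝ (⊤ : ℕ∞) (Function.uncurry (A j)))
    (hφ : ContDiff ℝ (⊤ : ℕ∞) (Function.uncurry φ))
    (hψ : ContDiff ℝ (⊤ : ℕ∞) (Function.uncurry ψ))
    -- F₁₂ = ∂₁A₂ - ∂₂A₁ = -½|φ|²
    (hF12 : ∀ t x,
      fderiv ℝ (A 1 t) x (Pi.single 0 1) - fderiv ℝ (A 0 t) x (Pi.single 1 1)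
        = -(1/2) * Complex.normSq (φ t x))
    -- F₀₁ = ∂ₜA₁ - ∂₁A₀ = -(i/2)(φ conj(D₂φ) - (D₂φ) conj(φ))
    (hF01 : ∀ t x,
      ((deriv (fun s => A 0 s x) t - fderiv ℝ (A0 t) x (Pi.single 0 1) : ℝ) : ℂ)
        = -(Complex.I/2) * (φ t x * (starRingEnd ℂ) (DcovSp A 1 φ t x)
            - DcovSp A 1 φ t x * (starRingEnd ℂ) (φ t x)))
    -- F₀₂ = ∂ₜA₂ - ∂₂A₀ = (i/2)(φ conj(D₁φ) - (D₁φ) conj(φ))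
    (hF02 : ∀ t x,
      ((deriv (fun s => A 1 s x) t - fderiv ℝ (A0 t) x (Pi.single 1 1) : ℝ) : ℂ)
        = (Complex.I/2) * (φ t x * (starRingEnd ℂ) (DcovSp A 0 φ t x)
            - DcovSp A 0 φ t x * (starRingEnd ℂ) (φ t x))) :
    ∀ (k : Fin 2) (t : ℝ) (x : Fin 2 → ℝ),
      covSchOp A0 A (JcovSp A k ψ) t x
        = JcovSp A k (covSchOp A0 A ψ) t x
          + 2 * Complex.I * (t : ℂ) * ∑ ℓ : Fin 2, (eps k ℓ : ℂ)
              * ((Complex.normSq (φ t x) : ℂ) * DcovSp A ℓ ψ t x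
                 + φ t x * (starRingEnd ℂ) (DcovSp A ℓ φ t x) * ψ t x) := by
  
  intro k t x
  have hA' : ∀ j, ContDiff ℝ (⊤ : ℕ∞) (aU A j) := hA
  have hA0' : ContDiff ℝ (⊤ : ℕ∞) (a0u A0) := hA0
  have h12u : ∀ q : E2, pdr (evs 0) (aU A 1) q - pdr (evs 1) (aU A 0) q
      = -(1/2) * Complex.normSq (Function.uncurry φ q) := by
    rintro ⟨t', x'⟩
    have h := hF12 t' x'
    rw [pdr_slice (hA 1) 0 t' x', pdr_slice (hA 0) 1 t' x'] at h
    exact h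
  have h01u : ∀ q : E2, ((pdr ets (aU A 0) q - pdr (evs 0) (a0u A0) q : ℝ) : ℂ)
      = -(Complex.I/2) * (Function.uncurry φ q
            * (starRingEnd ℂ) (DsU A 1 (Function.uncurry φ) q)
          - DsU A 1 (Function.uncurry φ) q * (starRingEnd ℂ) (Function.uncurry φ q)) := by
    rintro ⟨t', x'⟩
    have h := hF01 t' x'
    rw [pdr_slice_t (hA 0) t' x', pdr_slice hA0 0 t' x', DcovSp_eq hφ 1 t' x'] at h
    exact h
  have h02u : ∀ q : E2, ((pdr ets (aU A 1) q - pdr (evs 1) (a0u A0) q : ℝ) : ℂ)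
      = (Complex.I/2) * (Function.uncurry φ q
            * (starRingEnd ℂ) (DsU A 0 (Function.uncurry φ) q)
          - DsU A 0 (Function.uncurry φ) q * (starRingEnd ℂ) (Function.uncurry φ q)) := by
    rintro ⟨t', x'⟩
    have h := hF02 t' x'
    rw [pdr_slice_t (hA 1) t' x', pdr_slice hA0 1 t' x', DcovSp_eq hφ 0 t' x'] at h
    exact h
  have hJU : Function.uncurry (JcovSp A k ψ)
      = fun q : E2 => ((q.2 k : ℝ) : ℂ) * Function.uncurry ψ q
        + 2 * Complex.I * ((q.1 : ℝ) : ℂ) * DsU A k (Function.uncurry ψ) q := by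
    funext q
    obtain ⟨t', x'⟩ := q
    show (x' k : ℂ) * ψ t' x' + 2 * Complex.I * (t' : ℂ) * DcovSp A k ψ t' x' = _
    rw [DcovSp_eq hψ k t' x']
    rfl
  have hF : ContDiff ℝ (⊤ : ℕ∞) (fun q : E2 => ((q.2 k : ℝ) : ℂ) * Function.uncurry ψ q) :=
    (contDiff_x k).mul hψ
  have hG : ContDiff ℝ (⊤ : ℕ∞) (fun q : E2 =>
      2 * Complex.I * ((q.1 : ℝ) : ℂ) * DsU A k (Function.uncurry ψ) q) :=
    (contDiff_const.mul contDiff_time).mul (contDiff_DsU hA' hψ k)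
  have hJUc : ContDiff ℝ (⊤ : ℕ∞) (Function.uncurry (JcovSp A k ψ)) := by
    rw [hJU]; exact hF.add hG
  have hcovu : Function.uncurry (covSchOp A0 A ψ) = LU A0 A (Function.uncurry ψ) := by
    funext q
    obtain ⟨t', x'⟩ := q
    exact covSchOp_eq hA' hψ t' x'
  have hcovc : ContDiff ℝ (⊤ : ℕ∞) (Function.uncurry (covSchOp A0 A ψ)) := by
    rw [hcovu]; exact contDiff_LU hA0' hA' hψ
  rw [covSchOp_eq hA' hJUc t x, hJU, LU_add hA0' hA' hF hG ((t, x) : E2),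
    lemA hA0' hA' hψ k ((t, x) : E2), lemB hA0' hA' (contDiff_DsU hA' hψ k) ((t, x) : E2),
    show JcovSp A k (covSchOp A0 A ψ) t x
      = (x k : ℂ) * covSchOp A0 A ψ t x
        + 2 * Complex.I * (t : ℂ) * DcovSp A k (covSchOp A0 A ψ) t x from rfl,
    covSchOp_eq hA' hψ t x, DcovSp_eq hcovc k t x, hcovu, Fin.sum_univ_two,
    DcovSp_eq hψ 0 t x, DcovSp_eq hψ 1 t x, DcovSp_eq hφ 0 t x, DcovSp_eq hφ 1 t x]
  fin_cases k
  · simp only [Fin.zero_eta, Fin.mk_one, Fin.isValue]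
    rw [lemC0 hA0' hA' hφ hψ h12u h01u ((t, x) : E2)]
    norm_num [eps]
    ring
  · simp only [Fin.zero_eta, Fin.mk_one, Fin.isValue]
    rw [lemC1 hA0' hA' hφ hψ h12u h02u ((t, x) : E2)]
    norm_num [eps]
    ring
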